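/- arXiv:0901.1482 — 2 statements merged into one kernel-verified Lean document; each statement's English description precedes it below -/
import Mathlib

section
/- Let q = 2 and take phase φ(x) = d(x)^s with 1 ≤ s < 2 and interaction V(x,y) = (d(x) − d(y))², with coupling constants J_{ij} = J > 0, so that the one-site Hamiltonian is H^{i,ω} = d^s(x_i) + J Σ_{j∼i}(d(x_i) − d(ω_j))². Then setting c' = max{2(s−1)², 16J}, there exists a constant c'' ≥ 0 such that, at every x_i off the x₃-axis (where d is differentiable and |∇_i d| = 1): |∇_i H^{i,ω}|² + H^{i,ω} ≤ (c'+1) · d(x_i) ∇_i d(x_i)·∇_i H^{i,ω} + (c'+1) J Σ_{j∼i} d²(ω_j) + c''. -/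
open MeasureTheory Real Filter

namespace PaperLSI

noncomputable section

/-- The Heisenberg group `ℍ`, realized as `ℝ³`. -/
abbrev Heis : Type := ℝ × ℝ × ℝ

/-- The Heisenberg group law
`x·x̃ = (x₁+x̃₁, x₂+x̃₂, x₃+x̃₃+(x₁x̃₂−x₂x̃₁)/2)`. -/
def heisMul (x y : Heis) : Heis :=
  (x.1 + y.1, x.2.1 + y.2.1, x.2.2 + y.2.2 + (x.1 * y.2.1 - x.2.1 * y.1) / 2)

/-- The direction of the left-invariant vector field `X₁ = ∂₁ − (x₂/2)∂₃` at `x`. -/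
def X1dir (x : Heis) : Heis := (1, 0, -x.2.1 / 2)

/-- The direction of the left-invariant vector field `X₂ = ∂₂ + (x₁/2)∂₃` at `x`. -/
def X2dir (x : Heis) : Heis := (0, 1, x.1 / 2)

/-- The derivative `X₁ g` of `g` along `X₁`. -/
def X1 (g : Heis → ℝ) (x : Heis) : ℝ := fderiv ℝ g x (X1dir x)

/-- The derivative `X₂ g` of `g` along `X₂`. -/
def X2 (g : Heis → ℝ) (x : Heis) : ℝ := fderiv ℝ g x (X2dir x)

/-- The length `|∇g|` of the sub-gradient `∇g = (X₁g, X₂g)`. -/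
def gradNorm (g : Heis → ℝ) (x : Heis) : ℝ := Real.sqrt (X1 g x ^ 2 + X2 g x ^ 2)

/-- The Carnot–Carathéodory distance from `x` to the identity: the infimum of lengths
`∫₀¹ (a₁² + a₂²)^{1/2}` over admissible (horizontal) Lipschitz curves joining `e` to `x`. -/
def ccDist (x : Heis) : ℝ :=
  sInf { l : ℝ | ∃ (γ : ℝ → Heis) (a₁ a₂ : ℝ → ℝ) (K : NNReal),
    LipschitzOnWith K γ (Set.Icc 0 1) ∧ γ 0 = (0 : Heis) ∧ γ 1 = x ∧
    (∀ᵐ s ∂(volume.restrict (Set.Icc (0 : ℝ) 1)),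
      HasDerivAt γ (a₁ s • X1dir (γ s) + a₂ s • X2dir (γ s)) s) ∧
    l = ∫ s in (0 : ℝ)..1, Real.sqrt (a₁ s ^ 2 + a₂ s ^ 2) }

/-- The closed Carnot–Carathéodory ball `B_L = {x : d(x) ≤ L}`. -/
def ccBall (L : ℝ) : Set Heis := {x | ccDist x ≤ L}

/-- The configuration space `Ω = ℍ^ℤ`. -/
abbrev Conf : Type := ℤ → Heis

/-- The neighbours `{∼i} = {i−1, i+1}` of the site `i`. -/
def nbr (i : ℤ) : Finset ℤ := {i - 1, i + 1}

/-- The block `Λ(k) = {k−2, k−1, k, k+1, k+2}`. -/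
def blk (k : ℤ) : Finset ℤ := {k - 2, k - 1, k, k + 1, k + 2}

/-- Merge an inside configuration `x` on `Λ` with the boundary condition `ω` outside `Λ`. -/
def merge (Λ : Finset ℤ) (ω : Conf) (x : Λ → Heis) : Conf :=
  fun i => if h : i ∈ Λ then x ⟨i, h⟩ else ω i

/-- The Hamiltonian `H^{Λ} (η) = Σ_{i∈Λ} φ(η_i) + Σ_{i∈Λ, j∼i} J_{ij} V(η_i, η_j)`. -/
def ham (φ : Heis → ℝ) (V : Heis → Heis → ℝ) (J : ℤ → ℤ → ℝ) (Λ : Finset ℤ) (η : Conf) : ℝ :=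
  (∑ i ∈ Λ, φ (η i)) + ∑ i ∈ Λ, ∑ j ∈ nbr i, J i j * V (η i) (η j)

/-- The unnormalized local specification `e^{−H^{Λ,ω}} dx_Λ`, as a measure on `Ω`. -/
def specRaw (φ : Heis → ℝ) (V : Heis → Heis → ℝ) (J : ℤ → ℤ → ℝ) (Λ : Finset ℤ) (ω : Conf) :
    Measure Conf :=
  Measure.map (merge Λ ω)
    ((volume : Measure (Λ → Heis)).withDensity
      fun x => ENNReal.ofReal (Real.exp (-(ham φ V J Λ (merge Λ ω x)))))

/-- The local specification `𝔼^{Λ,ω}(dx_Λ) = e^{−H^{Λ,ω}} dx_Λ / Z^{Λ,ω}`. -/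
def spec (φ : Heis → ℝ) (V : Heis → Heis → ℝ) (J : ℤ → ℤ → ℝ) (Λ : Finset ℤ) (ω : Conf) :
    Measure Conf :=
  (specRaw φ V J Λ ω Set.univ)⁻¹ • specRaw φ V J Λ ω

/-- The expectation `𝔼^{Λ,ω} f`. -/
def specExp (φ : Heis → ℝ) (V : Heis → Heis → ℝ) (J : ℤ → ℤ → ℝ) (Λ : Finset ℤ) (ω : Conf)
    (f : Conf → ℝ) : ℝ :=
  ∫ η, f η ∂(spec φ V J Λ ω)

/-- `ν` is an infinite-volume Gibbs measure for the local specification: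
the DLR equation `ν 𝔼^{Λ,·} = ν` holds for all finite `Λ`. -/
def IsGibbs (φ : Heis → ℝ) (V : Heis → Heis → ℝ) (J : ℤ → ℤ → ℝ) (ν : Measure Conf) : Prop :=
  ∀ Λ : Finset ℤ, ν.bind (spec φ V J Λ) = ν

/-- `f` depends only on the coordinates in `S`. -/
def Localized (S : Set ℤ) (f : Conf → ℝ) : Prop :=
  ∀ ω ω' : Conf, (∀ i ∈ S, ω i = ω' i) → f ω = f ω'

/-- A smooth cylinder function localized in `Λ`. -/
def SmoothCylOn (Λ : Finset ℤ) (f : Conf → ℝ) : Prop :=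
  Localized (↑Λ) f ∧ ∀ ω : Conf, ContDiff ℝ (⊤ : ℕ∞) fun x : Λ → Heis => f (merge Λ ω x)

/-- A smooth (C^∞) cylinder function. -/
def SmoothCyl (f : Conf → ℝ) : Prop := ∃ Λ : Finset ℤ, SmoothCylOn Λ f

/-- A differentiable cylinder function. -/
def DiffCyl (f : Conf → ℝ) : Prop :=
  ∃ Λ : Finset ℤ, Localized (↑Λ) f ∧
    ∀ ω : Conf, Differentiable ℝ fun x : Λ → Heis => f (merge Λ ω x)

/-- `|∇_i f|(ω)`, the length of the sub-gradient in the `i`-th coordinate. -/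
def gradI (i : ℤ) (f : Conf → ℝ) (ω : Conf) : ℝ :=
  gradNorm (fun y => f (Function.update ω i y)) (ω i)

/-- The full gradient `|∇f|^q (ω) = Σ_{i∈ℤ} |∇_i f|^q (ω)`. -/
def fullGrad (q : ℝ) (f : Conf → ℝ) (ω : Conf) : ℝ := ∑' i : ℤ, gradI i f ω ^ q

/-- `ν |∇_i f|^q`. -/
def nuG (ν : Measure Conf) (q : ℝ) (i : ℤ) (f : Conf → ℝ) : ℝ := ∫ ω, gradI i f ω ^ q ∂ν

/-- `J₀ = J^{(q−1)/4}`. -/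
def J0 (Jc q : ℝ) : ℝ := Jc ^ ((q - 1) / 4)

/-- The tail sum `Σ_{r=3}^∞ J₀^{r−2} (ν|∇_{i+r}f|^q + ν|∇_{i−r}f|^q)`. -/
def tail3 (ν : Measure Conf) (q J0v : ℝ) (i : ℤ) (f : Conf → ℝ) : ℝ :=
  ∑' m : ℕ, J0v ^ (m + 1) * (nuG ν q (i + (m + 3)) f + nuG ν q (i - (m + 3)) f)

/-- The tail sum `Σ_{r=2}^∞ J₀^{r−2} (ν|∇_{j+r}f|^q + ν|∇_{j−r}f|^q)`. -/
def tail2 (ν : Measure Conf) (q J0v : ℝ) (j : ℤ) (f : Conf → ℝ) : ℝ :=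
  ∑' m : ℕ, J0v ^ m * (nuG ν q (j + (m + 2)) f + nuG ν q (j - (m + 2)) f)

/-- Standing regularity/positivity assumptions on the phase and the interaction. -/
structure Basic (φ : Heis → ℝ) (V : Heis → Heis → ℝ) : Prop where
  hφ0 : ∀ x, 0 ≤ φ x
  hV0 : ∀ x y, 0 ≤ V x y
  hφs : ContDiff ℝ (⊤ : ℕ∞) φ
  hVs : ContDiff ℝ (⊤ : ℕ∞) fun p : Heis × Heis => V p.1 p.2

/-- Hypothesis (H*): uniform local lower bounds on the two-site density on balls. -/
def Hstar (φ : Heis → ℝ) (V : Heis → Heis → ℝ) (J : ℤ → ℤ → ℝ) : Prop :=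
  ∃ Bs Bu : ℝ → ℝ, ∀ L : ℝ, 0 < L →
    0 < Bs L ∧ 0 < Bu L ∧
    (∀ (i : ℤ) (ω : Conf), (∀ j ∈ ({i - 2, i, i + 2} : Finset ℤ), ccDist (ω j) ≤ L) →
      ENNReal.ofReal (1 / Bu L) ≤
        ∫⁻ p in ccBall L ×ˢ ccBall L,
          ENNReal.ofReal (Real.exp (-(ham φ V J (nbr i)
            (Function.update (Function.update ω (i - 1) p.1) (i + 1) p.2))))
          ∂(volume : Measure (Heis × Heis))) ∧
    (∀ (i : ℤ) (ω : Conf), (∀ j ∈ ({i - 2, i, i + 2} : Finset ℤ), ccDist (ω j) ≤ L) →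
      ∀ y ∈ ccBall L, ∀ z ∈ ccBall L,
        1 / Bs L ≤ Real.exp (-(ham φ V J (nbr i)
          (Function.update (Function.update ω (i - 1) y) (i + 1) z))))

/-- The boundary-free one-site measure `μ(dx) = e^{−φ(x)}dx/∫e^{−φ}dx` on `ℍ`. -/
def oneSiteFree (φ : Heis → ℝ) : Measure Heis :=
  ((volume.withDensity fun x => ENNReal.ofReal (Real.exp (-φ x))) Set.univ)⁻¹ •
    volume.withDensity fun x => ENNReal.ofReal (Real.exp (-φ x))

/-- Hypothesis (H0′): the one-site boundary-free measure satisfies the `q` log-Sobolev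
inequality with constant `c`. -/
def H0p (φ : Heis → ℝ) (c q : ℝ) : Prop :=
  ∀ f : Heis → ℝ, ContDiff ℝ (⊤ : ℕ∞) f →
    ∫ x, |f x| ^ q * Real.log (|f x| ^ q / ∫ y, |f y| ^ q ∂oneSiteFree φ) ∂oneSiteFree φ ≤
      c * ∫ x, gradNorm f x ^ q ∂oneSiteFree φ

/-- Hypothesis (H0″): the non-uniform U-bound for the two-site measures `𝔼^{{∼i},ω}`,
with boundary function `D̂_{{∼i}}(ω)` depending only on `ω_{i−2}, ω_i, ω_{i+2}` and
satisfying `ν e^{ε D̂_{{∼i}}(ω)} ≤ K̂`. -/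
def H0pp (φ : Heis → ℝ) (V : Heis → Heis → ℝ) (J : ℤ → ℤ → ℝ) (ν : Measure Conf)
    (Chat : ℝ) (Dhat : ℤ → Conf → ℝ) (ε Khat q : ℝ) : Prop :=
  (∀ (i : ℤ) (ω ω' : Conf), ω (i - 2) = ω' (i - 2) → ω i = ω' i → ω (i + 2) = ω' (i + 2) →
      Dhat i ω = Dhat i ω') ∧
  (∀ i : ℤ, ∫⁻ ω, ENNReal.ofReal (Real.exp (ε * Dhat i ω)) ∂ν ≤ ENNReal.ofReal Khat) ∧
  (∀ (i : ℤ) (ω : Conf) (f : Conf → ℝ), SmoothCyl f →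
    ∫ η, |f η| ^ q * ((∑ k ∈ nbr i, gradI k (ham φ V J (nbr i)) η ^ q) + ham φ V J (nbr i) η)
        ∂spec φ V J (nbr i) ω ≤
      Chat * ∫ η, ∑ k ∈ nbr i, gradI k f η ^ q ∂spec φ V J (nbr i) ω +
        Dhat i ω * ∫ η, |f η| ^ q ∂spec φ V J (nbr i) ω)

/-- Hypothesis (H1): each restriction `ν_{Λ(k)}` of the Gibbs measure satisfies the
`q` log-Sobolev inequality with constant `C`. -/
def H1 (ν : Measure Conf) (C q : ℝ) : Prop :=
  ∀ (k : ℤ) (f : Conf → ℝ), SmoothCylOn (blk k) f →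
    ∫ ω, |f ω| ^ q * Real.log (|f ω| ^ q / ∫ η, |f η| ^ q ∂ν) ∂ν ≤
      C * ∫ ω, ∑ i ∈ blk k, gradI i f ω ^ q ∂ν

/-- Hypothesis (H2): exponential integrability of the interaction and of its gradient
under `ν_{Λ(i)}`. -/
def H2 (V : Heis → Heis → ℝ) (ν : Measure Conf) (ε Khat q : ℝ) : Prop :=
  ∀ i : ℤ, ∀ r ∈ blk i, ∀ s ∈ blk i,
    (∫⁻ ω, ENNReal.ofReal (Real.exp ((2 : ℝ) ^ (q + 2) * ε * V (ω r) (ω s))) ∂ν ≤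
      ENNReal.ofReal Khat) ∧
    (∫⁻ ω, ENNReal.ofReal
        (Real.exp ((2 : ℝ) ^ (q + 2) * ε * gradI r (fun η => V (η r) (η s)) ω ^ q)) ∂ν ≤
      ENNReal.ofReal Khat)

/-- Hypothesis (H4): `ν_{Λ(i)} e^{ε 2^{10} d(x_i)} ≤ K̂`. -/
def H4 (ν : Measure Conf) (ε Khat : ℝ) : Prop :=
  ∀ i : ℤ, ∫⁻ ω, ENNReal.ofReal (Real.exp (ε * 2 ^ 10 * ccDist (ω i))) ∂ν ≤ ENNReal.ofReal Khat

/-- `𝔼^{{∼k},ω} f` as a function of `ω`. -/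
def nbrE (φ : Heis → ℝ) (V : Heis → Heis → ℝ) (J : ℤ → ℤ → ℝ) (k : ℤ) (f : Conf → ℝ) :
    Conf → ℝ :=
  fun ω => specExp φ V J (nbr k) ω f

/-- The set `Λ` enlarged by its nearest neighbours. -/
def ext1 (Λ : Finset ℤ) : Finset ℤ := Λ ∪ Λ.image (· + 1) ∪ Λ.image (· - 1)

/-- The even sites `Γ₀ ∩ Λ` of `Λ`. -/
def evenPart (Λ : Finset ℤ) : Finset ℤ := Λ.filter fun i => i % 2 = 0

/-- The odd sites `Γ₁ ∩ Λ` of `Λ`. -/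
def oddPart (Λ : Finset ℤ) : Finset ℤ := Λ.filter fun i => i % 2 ≠ 0

/-- `Q(k,k) = ν_{Λ(k)} |∇_{Λ(k)} (𝔼^{M(k)} |f − 𝔼^{{∼k}}f|^q)^{1/q}|^q`, for a cylinder
function `f` localized in `Λf` (so that the expectation over the infinite complement
`M(k) = ℤ∖Λ(k)` reduces to an expectation over finitely many relevant sites). -/
def Qkk (φ : Heis → ℝ) (V : Heis → Heis → ℝ) (J : ℤ → ℤ → ℝ) (ν : Measure Conf) (q : ℝ)
    (Λf : Finset ℤ) (k : ℤ) (f : Conf → ℝ) : ℝ :=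
  ∫ ω, ∑ u ∈ blk k,
    gradI u (fun ω' =>
      (specExp φ V J ((ext1 Λf ∪ blk k) \ blk k) ω'
        fun η => |f η - nbrE φ V J k f η| ^ q) ^ (1 / q)) ω ^ q ∂ν

/-- The expectation operator `f ↦ 𝔼^{Λ,·} f`. -/
def Eon (φ : Heis → ℝ) (V : Heis → Heis → ℝ) (J : ℤ → ℤ → ℝ) (Λ : Finset ℤ) (f : Conf → ℝ) :
    Conf → ℝ :=
  fun ω => specExp φ V J Λ ω f

/-- The iterates `𝒫ⁿ f` of `𝒫 = 𝔼^{Γ₁} 𝔼^{Γ₀}`, realized on cylinder functions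
localized in `[−N, N]` (only the finitely many relevant even/odd sites contribute). -/
def Piter (φ : Heis → ℝ) (V : Heis → Heis → ℝ) (J : ℤ → ℤ → ℝ) (N : ℕ) :
    ℕ → (Conf → ℝ) → Conf → ℝ
  | 0, f => f
  | n + 1, f =>
      Eon φ V J (oddPart (Finset.Icc (-(N + 2 * n + 2 : ℤ)) (N + 2 * n + 2)))
        (Eon φ V J (evenPart (Finset.Icc (-(N + 2 * n + 1 : ℤ)) (N + 2 * n + 1)))
          (Piter φ V J N n f))

/-- The one-site Hamiltonian `H^{i,ω}(y) = φ(y) + Σ_{j∼i} J_{ij} V(y, ω_j)`. -/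
def hamOne (φ : Heis → ℝ) (V : Heis → Heis → ℝ) (J : ℤ → ℤ → ℝ) (i : ℤ) (ω : Conf)
    (y : Heis) : ℝ :=
  φ y + ∑ j ∈ nbr i, J i j * V y (ω j)

/-- `η(i,ω) = d(x_{i−1}) + d(x_{i+1}) + Σ_{j∼{i−1,i+1}} d(ω_j)` evaluated on the
configuration `ζ`. -/
def ηAux (i : ℤ) (ω ζ : Conf) : ℝ :=
  ccDist (ζ (i - 1)) + ccDist (ζ (i + 1)) +
    (ccDist (ω (i - 2)) + ccDist (ω i) + ccDist (ω (i + 2)))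

end


noncomputable def cpp (s J : ℝ) : ℝ :=
  2*s^2*(1 + ((2*s^2/((max (2*(s-1)^2) (16*J) + 1)*s - 1))^((2-s)⁻¹))^(2*s-2))

lemma claim (s M t : ℝ) (hs1 : 1 ≤ s) (hs2 : s < 2) (hM : 0 < M) (ht : 0 < t) :
    2*s^2 * t^(2*s-2) ≤ M * t^s + 2*s^2*(1 + ((2*s^2/M)^((2-s)⁻¹))^(2*s-2)) := by
  have hs0 : (0:ℝ) < s := by linarith
  set T : ℝ := (2*s^2/M)^((2-s)⁻¹) with hT
  have hT0 : 0 ≤ T := Real.rpow_nonneg (by positivity) _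
  have hPnn : 0 ≤ t ^ s := Real.rpow_nonneg ht.le s
  rcases le_total t T with h | h
  · have h1 : t^(2*s-2) ≤ T^(2*s-2) := Real.rpow_le_rpow ht.le h (by linarith)
    nlinarith [sq_nonneg s, mul_nonneg (mul_nonneg (by norm_num : (0:ℝ) ≤ 2) (sq_nonneg s)) hPnn, mul_le_mul_of_nonneg_left h1 (by positivity : (0:ℝ) ≤ 2*s^2), mul_nonneg hM.le hPnn]
  · have hexp : (2-s)⁻¹ * (2-s) = 1 := inv_mul_cancel₀ (by linarith)
    have h1 : T ^ (2-s) = 2*s^2/M := by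
      rw [hT, ← Real.rpow_mul (by positivity), hexp, Real.rpow_one]
    have h2 : 2*s^2/M ≤ t^(2-s) := by
      rw [← h1]; exact Real.rpow_le_rpow hT0 h (by linarith)
    have h4 : 2*s^2 ≤ M * t^(2-s) := by
      rw [div_le_iff₀ hM] at h2; linarith
    have h3 : t^(2*s-2) * t^(2-s) = t^s := by
      rw [← Real.rpow_add ht]; ring_nf
    have h5 : 0 ≤ t^(2*s-2) := Real.rpow_nonneg ht.le _
    have h6 := mul_le_mul_of_nonneg_right h4 h5
    have h7 : 0 ≤ T^(2*s-2) := Real.rpow_nonneg hT0 _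
    nlinarith [sq_nonneg s]

lemma quad_nonneg (m J t a b : ℝ) (hm : 16*J ≤ m) (hJ : 0 < J) :
    2*(J*(2*(t-a)) + J*(2*(t-b)))^2 + (J*(t-a)^2 + J*(t-b)^2) ≤
      (m+1)*(t*(J*(2*(t-a)) + J*(2*(t-b)))) + (m+1)*J*(a^2+b^2) := by
  have hm0 : 0 ≤ m := le_trans (by linarith) hm
  have hA : (0:ℝ) < 4*m+2-32*J := by linarith
  have hid : 4*(4*m+2-32*J) * ((m+1)*(t*(J*(2*(t-a)) + J*(2*(t-b)))) + (m+1)*J*(a^2+b^2)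
      - (2*(J*(2*(t-a)) + J*(2*(t-b)))^2 + (J*(t-a)^2 + J*(t-b)^2)))
      = J*((2*(4*m+2-32*J)*t - (2*m-32*J)*(a+b))^2
        + (2*m-32*J)*(2*m+2)*(a+b)^2 + 2*(4*m+2-32*J)*m*(a-b)^2) := by ring
  have hR : 0 ≤ J*((2*(4*m+2-32*J)*t - (2*m-32*J)*(a+b))^2
        + (2*m-32*J)*(2*m+2)*(a+b)^2 + 2*(4*m+2-32*J)*m*(a-b)^2) := by
    have h1 : (0:ℝ) ≤ 2*m-32*J := by linarith
    have h2 : (0:ℝ) ≤ 2*m+2 := by linarith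
    have h3 : (0:ℝ) ≤ 2*(4*m+2-32*J) := by linarith
    positivity
  rw [← sub_nonneg]
  nlinarith [hid, hR, hA]

lemma scalar_main (s J a b t : ℝ) (hs1 : 1 ≤ s) (hs2 : s < 2) (hJ : 0 < J)
    (ha : 0 ≤ a) (hb : 0 ≤ b) (ht : 0 < t) :
    (s*t^(s-1) + (J*(2*(t-a)) + J*(2*(t-b))))^2 + (t^s + (J*(t-a)^2 + J*(t-b)^2)) ≤
      (max (2*(s-1)^2) (16*J) + 1) * (t * (s*t^(s-1) + (J*(2*(t-a)) + J*(2*(t-b))))) +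
      (max (2*(s-1)^2) (16*J) + 1) * J * (a^2+b^2) + cpp s J := by
  have hm16 : 16*J ≤ max (2*(s-1)^2) (16*J) := le_max_right _ _
  set m := max (2*(s-1)^2) (16*J) with hmdef
  have hm0 : 0 < m := lt_of_lt_of_le (by linarith) hm16
  have hM' : 0 < (m+1)*s - 1 := by nlinarith
  have hclaim : 2*s^2 * t^(2*s-2) ≤ ((m+1)*s-1) * t^s + cpp s J := by
    have := claim s ((m+1)*s-1) t hs1 hs2 hM' ht
    rw [cpp, ← hmdef]
    exact this
  have hU : t^(s-1) * t = t^s := by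
    have h := Real.rpow_add ht (s-1) 1
    rw [Real.rpow_one] at h
    rw [← h]; norm_num
  have hUsq : (t^(s-1))^2 = t^(2*s-2) := by
    rw [← Real.rpow_natCast (t^(s-1)) 2, ← Real.rpow_mul ht.le]
    norm_num; ring_nf
  have hq := quad_nonneg m J t a b hm16 hJ
  have hUnn : 0 ≤ t^(s-1) := Real.rpow_nonneg ht.le _
  nlinarith [sq_nonneg (s*t^(s-1) - (J*(2*(t-a)) + J*(2*(t-b)))), hclaim, hq, hU, hUsq]

lemma ccDist_nonneg (x : Heis) : 0 ≤ ccDist x := by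
  apply Real.sInf_nonneg
  rintro l ⟨γ, a1, a2, K, -, -, -, -, rfl⟩
  exact intervalIntegral.integral_nonneg (by norm_num) (fun s _ => Real.sqrt_nonneg _)

lemma cpp_nonneg (s J : ℝ) (hs1 : 1 ≤ s) (hs2 : s < 2) (hJ : 0 < J) : 0 ≤ cpp s J := by
  have hm16 : 16*J ≤ max (2*(s-1)^2) (16*J) := le_max_right _ _
  have hM' : 0 < (max (2*(s-1)^2) (16*J) + 1)*s - 1 := by nlinarith
  have h1 : (0:ℝ) ≤ ((2*s^2/((max (2*(s-1)^2) (16*J) + 1)*s - 1))^((2-s)⁻¹))^(2*s-2) :=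
    Real.rpow_nonneg (Real.rpow_nonneg (by positivity) _) _
  have : (0:ℝ) ≤ 2*s^2 := by positivity
  rw [cpp]; nlinarith

/-- for `q = 2`, phase `φ(x) = d(x)^s` with `1 ≤ s < 2` and interaction
`V(x,y) = (d(x) − d(y))²` with coupling `J > 0`, setting `c' = max{2(s−1)², 16J}`, there
is `c'' ≥ 0` such that at every point off the `x₃`-axis (where `d` is differentiable and
`|∇d| = 1`):
`|∇_i H^{i,ω}|² + H^{i,ω} ≤ (c'+1) d(x_i)∇_i d·∇_i H^{i,ω}
  + (c'+1) J Σ_{j∼i} d²(ω_j) + c''`. -/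
theorem pointwise_Ubound_example_quadratic
    (s Jcoup : ℝ) (hs1 : 1 ≤ s) (hs2 : s < 2) (hJ : 0 < Jcoup) :
    ∃ c'' : ℝ, 0 ≤ c'' ∧
      ∀ (i : ℤ) (ω : Conf) (x : Heis),
        (x.1 ≠ 0 ∨ x.2.1 ≠ 0) →
        DifferentiableAt ℝ ccDist x →
        gradNorm ccDist x = 1 →
        gradNorm (hamOne (fun y => ccDist y ^ s)
              (fun y z => (ccDist y - ccDist z) ^ 2) (fun _ _ => Jcoup) i ω) x ^ 2 +
            hamOne (fun y => ccDist y ^ s)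
              (fun y z => (ccDist y - ccDist z) ^ 2) (fun _ _ => Jcoup) i ω x ≤
          (max (2 * (s - 1) ^ 2) (16 * Jcoup) + 1) *
              (ccDist x *
                (X1 ccDist x * X1 (hamOne (fun y => ccDist y ^ s)
                    (fun y z => (ccDist y - ccDist z) ^ 2) (fun _ _ => Jcoup) i ω) x +
                  X2 ccDist x * X2 (hamOne (fun y => ccDist y ^ s)
                    (fun y z => (ccDist y - ccDist z) ^ 2) (fun _ _ => Jcoup) i ω) x)) +
            (max (2 * (s - 1) ^ 2) (16 * Jcoup) + 1) * Jcoup *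
              (∑ j ∈ nbr i, ccDist (ω j) ^ 2) + c'' := by
  classical
  refine ⟨cpp s Jcoup, cpp_nonneg s Jcoup hs1 hs2 hJ, ?_⟩
  intro i ω x _hx hdiff hgrad
  have ht0 : 0 ≤ ccDist x := ccDist_nonneg x
  have ht : 0 < ccDist x := by
    rcases ht0.lt_or_eq with h | h
    · exact h
    · exfalso
      have hmin : IsLocalMin ccDist x :=
        Filter.Eventually.of_forall (fun y => by rw [← h]; exact ccDist_nonneg y)
      have hz := hmin.fderiv_eq_zero
      rw [gradNorm, X1, X2, hz] at hgrad
      simp at hgrad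
  set t := ccDist x with htdef
  set a := ccDist (ω (i-1)) with hadef
  set b := ccDist (ω (i+1)) with hbdef
  have hne : (i-1 : ℤ) ≠ i+1 := by omega
  set D := s*t^(s-1) + (Jcoup*(2*(t-a)) + Jcoup*(2*(t-b))) with hDdef
  have hg : HasDerivAt (fun r : ℝ => r ^ s + (Jcoup*(r-a)^2 + Jcoup*(r-b)^2)) D t := by
    have h1 : HasDerivAt (fun r : ℝ => r ^ s) (s * t^(s-1)) t :=
      Real.hasDerivAt_rpow_const (Or.inl ht.ne')
    have h2 : HasDerivAt (fun r : ℝ => Jcoup*(r-a)^2) (Jcoup*(2*(t-a))) t := by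
      have := (((hasDerivAt_id t).sub_const a).pow 2).const_mul Jcoup
      simpa using this
    have h3 : HasDerivAt (fun r : ℝ => Jcoup*(r-b)^2) (Jcoup*(2*(t-b))) t := by
      have := (((hasDerivAt_id t).sub_const b).pow 2).const_mul Jcoup
      simpa using this
    exact h1.add (h2.add h3)
  set H := hamOne (fun y => ccDist y ^ s)
      (fun y z => (ccDist y - ccDist z) ^ 2) (fun _ _ => Jcoup) i ω with hHdef
  have hEq : H = (fun r : ℝ => r ^ s + (Jcoup*(r-a)^2 + Jcoup*(r-b)^2)) ∘ ccDist := by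
    funext y
    simp only [hHdef, hamOne, nbr, Function.comp, hadef, hbdef]
    rw [Finset.sum_pair hne]
  have hF : HasFDerivAt H (D • fderiv ℝ ccDist x) x := by
    rw [hEq]
    exact hg.comp_hasFDerivAt x hdiff.hasFDerivAt
  have hfd : fderiv ℝ H x = D • fderiv ℝ ccDist x := hF.fderiv
  have hX1 : X1 H x = D * X1 ccDist x := by
    rw [X1, hfd]; simp [X1]
  have hX2 : X2 H x = D * X2 ccDist x := by
    rw [X2, hfd]; simp [X2]
  have hsum0 : 0 ≤ X1 ccDist x ^ 2 + X2 ccDist x ^ 2 := by positivity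
  have hsq : X1 ccDist x ^ 2 + X2 ccDist x ^ 2 = 1 := by
    have h := hgrad
    rw [gradNorm] at h
    calc X1 ccDist x ^ 2 + X2 ccDist x ^ 2
        = Real.sqrt (X1 ccDist x ^ 2 + X2 ccDist x ^ 2) ^ 2 := (Real.sq_sqrt hsum0).symm
      _ = 1 := by rw [h]; norm_num
  have hgn2 : gradNorm H x ^ 2 = D^2 := by
    rw [gradNorm, Real.sq_sqrt (by positivity), hX1, hX2]
    linear_combination D^2 * hsq
  have hdot : X1 ccDist x * X1 H x + X2 ccDist x * X2 H x = D := by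
    rw [hX1, hX2]; linear_combination D * hsq
  have hHx : H x = t^s + (Jcoup*(t-a)^2 + Jcoup*(t-b)^2) := by
    simp only [hHdef, hamOne, nbr, hadef, hbdef, htdef]
    rw [Finset.sum_pair hne]
  have hsum2 : ∑ j ∈ nbr i, ccDist (ω j) ^ 2 = a^2 + b^2 := by
    rw [nbr, Finset.sum_pair hne]
  rw [hgn2, hHx, hdot, hsum2]
  exact scalar_main s Jcoup a b t hs1 hs2 hJ (ccDist_nonneg _) (ccDist_nonneg _) ht


end PaperLSI
end

section
/- Let q ∈ (1,2] with dual exponent p (1/p+1/q = 1), and take phase φ(x) = d(x)^s with 1 ≤ s < p and interaction V(x,y) = (d(x) + d(y))^p, with coupling constants J_{ij} = J > 0, so that the one-site Hamiltonian is H^{i,ω} = d^s(x_i) + J Σ_{j∼i}(d(x_i) + d(ω_j))^p. Then setting c' = max{2^{q−1}(s−1)^q, 2^{2q−2} J^{q−1} p^q}, there exists a constant c''' ≥ 0 such that, at every x_i off the x₃-axis (where d is differentiable and |∇_i d| = 1): |∇_i H^{i,ω}|^q + H^{i,ω} ≤ (c'+1) · d(x_i) ∇_i d(x_i)·∇_i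 H^{i,ω} + (c'+1) J Σ_{j∼i} d^p(ω_j) + c'''. -/
open MeasureTheory Real Filter

namespace PaperLSI

/-- two-term power mean inequality over ℝ -/
lemma two_rpow_ineq {B C q : ℝ} (hB : 0 ≤ B) (hC : 0 ≤ C) (hq : 1 ≤ q) :
    (B + C) ^ q ≤ 2 ^ (q - 1) * (B ^ q + C ^ q) := by
  have h := NNReal.rpow_add_le_mul_rpow_add_rpow B.toNNReal C.toNNReal hq
  have h' := NNReal.coe_le_coe.2 h
  push_cast at h'
  rwa [Real.coe_toNNReal _ hB, Real.coe_toNNReal _ hC] at h'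

/-- Young-style: (t+d)^p ≤ p t (t+d)^{p-1} + d^p -/
lemma young_aux {p q t d : ℝ} (hconj : Real.HolderConjugate p q) (ht : 0 < t) (hd : 0 ≤ d) :
    (t + d) ^ p ≤ p * (t * (t + d) ^ (p - 1)) + d ^ p := by
  have hp0 : 0 < p := hconj.pos
  have hq0 : 0 < q := hconj.symm.pos
  have hu : 0 < t + d := by linarith
  have hpe : (p - 1) * q = p := by
    have h := hconj.inv_add_inv_eq_one
    field_simp at h
    nlinarith [h]
  have hsplit : (t + d) ^ p = t * (t + d) ^ (p - 1) + d * (t + d) ^ (p - 1) := by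
    have h := Real.rpow_add hu 1 (p - 1)
    rw [show (1 : ℝ) + (p - 1) = p by ring, Real.rpow_one] at h
    rw [h]; ring
  have hyoung : d * (t + d) ^ (p - 1) ≤ d ^ p / p + ((t + d) ^ (p - 1)) ^ q / q :=
    Real.young_inequality_of_nonneg hd (Real.rpow_nonneg hu.le _) hconj
  have hVq : ((t + d) ^ (p - 1)) ^ q = (t + d) ^ p := by
    rw [← Real.rpow_mul hu.le, hpe]
  rw [hVq] at hyoung
  have hcon : 1 / p + 1 / q = 1 := by
    have := hconj.inv_add_inv_eq_one; simpa [one_div] using this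
  have hqp : q + p = p * q := by field_simp at hcon; linarith
  have hmul := mul_le_mul_of_nonneg_left hyoung (by positivity : (0:ℝ) ≤ p * q)
  have e1 : p * q * (d ^ p / p) = q * d ^ p := by field_simp
  have e2 : p * q * ((t + d) ^ p / q) = p * (t + d) ^ p := by field_simp
  have e5 : p * q * ((t + d) ^ p)
      = p * q * (t * (t + d) ^ (p - 1)) + p * q * (d * (t + d) ^ (p - 1)) := by
    rw [hsplit]; ring
  have e3 : (q + p) * ((t + d) ^ p) = (p * q) * ((t + d) ^ p) := by rw [hqp]
  have hfin : q * ((t + d) ^ p) ≤ q * (p * (t * (t + d) ^ (p - 1)) + d ^ p) := by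
    nlinarith [hmul, e1, e2, e5, e3]
  exact le_of_mul_le_mul_left hfin hq0

/-- absorption : K t^a ≤ δ t^b + C -/
lemma absorb {a b K δ : ℝ} (ha : 0 ≤ a) (hab : a < b) (hK : 0 ≤ K) (hδ : 0 < δ) :
    ∃ C : ℝ, 0 ≤ C ∧ ∀ t : ℝ, 0 < t → K * t ^ a ≤ δ * t ^ b + C := by
  set M : ℝ := max 1 ((K / δ) ^ (1 / (b - a))) with hM
  have hM1 : (1 : ℝ) ≤ M := le_max_left _ _
  have hM0 : 0 < M := lt_of_lt_of_le one_pos hM1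
  have hba : 0 < b - a := by linarith
  refine ⟨K * M ^ a, by positivity, fun t ht => ?_⟩
  rcases le_total t M with h | h
  · have h1 : t ^ a ≤ M ^ a := Real.rpow_le_rpow ht.le h ha
    have h2 : K * t ^ a ≤ K * M ^ a := mul_le_mul_of_nonneg_left h1 hK
    have h3 : 0 ≤ δ * t ^ b := by positivity
    linarith
  · -- M ≤ t
    have hKM : K * M ^ (a - b) ≤ δ := by
      rcases eq_or_lt_of_le hK with h0 | h0
      · rw [← h0]; simpa using hδ.le
      · have hKδ : 0 < K / δ := by positivity
        have hge : (K / δ) ^ (1 / (b - a)) ≤ M := le_max_right _ _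
        have h1 : K / δ ≤ M ^ (b - a) := by
          have h2 : ((K / δ) ^ (1 / (b - a))) ^ (b - a) ≤ M ^ (b - a) :=
            Real.rpow_le_rpow (Real.rpow_nonneg hKδ.le _) hge hba.le
          rwa [← Real.rpow_mul hKδ.le, one_div, inv_mul_cancel₀ hba.ne', Real.rpow_one] at h2
        have hMb : 0 < M ^ (b - a) := Real.rpow_pos_of_pos hM0 _
        have h2 : K ≤ δ * M ^ (b - a) := by
          have := (div_le_iff₀ hδ).mp h1; linarith
        have h3 : K * (M ^ (b - a))⁻¹ ≤ (δ * M ^ (b - a)) * (M ^ (b - a))⁻¹ :=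
          mul_le_mul_of_nonneg_right h2 (inv_nonneg.2 hMb.le)
        have h4 : (δ * M ^ (b - a)) * (M ^ (b - a))⁻¹ = δ := by
          rw [mul_assoc, mul_inv_cancel₀ hMb.ne', mul_one]
        rw [show a - b = -(b - a) by ring, Real.rpow_neg hM0.le]
        linarith

    have hsplit : t ^ a = t ^ (a - b) * t ^ b := by
      rw [← Real.rpow_add ht]; ring_nf
    have hmono : t ^ (a - b) ≤ M ^ (a - b) :=
      Real.rpow_le_rpow_of_nonpos hM0 h (by linarith)
    have htb : 0 ≤ t ^ b := Real.rpow_nonneg ht.le _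
    have h4 : K * t ^ a ≤ (K * M ^ (a - b)) * t ^ b := by
      rw [hsplit]
      have := mul_le_mul_of_nonneg_left hmono hK
      nlinarith [this, htb]
    have h5 : (K * M ^ (a - b)) * t ^ b ≤ δ * t ^ b := mul_le_mul_of_nonneg_right hKM htb
    have h6 : 0 ≤ K * M ^ a := by positivity
    linarith


lemma scalar_key {q p s J t d1 d2 c' C : ℝ}
    (hq1 : 1 < q) (hp1 : 1 < p) (hqp : q + p = p * q)
    (hconj : Real.HolderConjugate p q)
    (hs1 : 1 ≤ s) (hJ : 0 < J) (ht : 0 < t) (hd1 : 0 ≤ d1) (hd2 : 0 ≤ d2)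
    (hc'0 : 0 ≤ c') (hc2 : 2 ^ (2 * q - 2) * J ^ (q - 1) * p ^ q ≤ c')
    (habs : 2 ^ (q - 1) * s ^ q * t ^ ((s - 1) * q) ≤ ((c' + 1) * s - 1) * t ^ s + C) :
    (s * t ^ (s - 1) + (J * (p * (t + d1) ^ (p - 1)) + J * (p * (t + d2) ^ (p - 1)))) ^ q
      + (t ^ s + (J * (t + d1) ^ p + J * (t + d2) ^ p))
    ≤ (c' + 1) * (t * (s * t ^ (s - 1)
          + (J * (p * (t + d1) ^ (p - 1)) + J * (p * (t + d2) ^ (p - 1)))))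
        + (c' + 1) * J * (d1 ^ p + d2 ^ p) + C := by
  have hq0 : 0 < q := by linarith
  have hp0 : 0 < p := by linarith
  have hs0 : 0 < s := by linarith
  have hu1 : 0 < t + d1 := by linarith
  have hu2 : 0 < t + d2 := by linarith
  have hpe : (p - 1) * q = p := by linear_combination -hqp
  set V1 := (t + d1) ^ (p - 1) with hV1
  set V2 := (t + d2) ^ (p - 1) with hV2
  have hV10 : 0 ≤ V1 := Real.rpow_nonneg hu1.le _
  have hV20 : 0 ≤ V2 := Real.rpow_nonneg hu2.le _
  set U1 := (t + d1) ^ p with hU1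
  set U2 := (t + d2) ^ p with hU2
  have hU10 : 0 ≤ U1 := Real.rpow_nonneg hu1.le _
  have hU20 : 0 ≤ U2 := Real.rpow_nonneg hu2.le _
  set T1 := t ^ (s - 1) with hT1
  have hT10 : 0 ≤ T1 := Real.rpow_nonneg ht.le _
  set B := s * T1 with hB
  set Cc := J * (p * V1) + J * (p * V2) with hCc
  have hB0 : 0 ≤ B := mul_nonneg hs0.le hT10
  have hCc0 : 0 ≤ Cc := by positivity
  -- power mean splits
  have h3 : (B + Cc) ^ q ≤ 2 ^ (q - 1) * (B ^ q + Cc ^ q) := two_rpow_ineq hB0 hCc0 hq1.le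
  have hBq : B ^ q = s ^ q * t ^ ((s - 1) * q) := by
    rw [hB, hT1, Real.mul_rpow hs0.le (Real.rpow_nonneg ht.le _), ← Real.rpow_mul ht.le]
  -- Cc ^ q bound
  have hCceq : Cc = (J * p) * (V1 + V2) := by rw [hCc]; ring
  have hCcq : Cc ^ q ≤ (J * p) ^ q * (2 ^ (q - 1) * (U1 + U2)) := by
    rw [hCceq, Real.mul_rpow (by positivity) (by positivity)]
    have h4 : (V1 + V2) ^ q ≤ 2 ^ (q - 1) * (V1 ^ q + V2 ^ q) := two_rpow_ineq hV10 hV20 hq1.le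
    have hV1q : V1 ^ q = U1 := by rw [hV1, hU1, ← Real.rpow_mul hu1.le, hpe]
    have hV2q : V2 ^ q = U2 := by rw [hV2, hU2, ← Real.rpow_mul hu2.le, hpe]
    rw [hV1q, hV2q] at h4
    exact mul_le_mul_of_nonneg_left h4 (by positivity)
  have h2q : (2:ℝ) ^ (q - 1) * 2 ^ (q - 1) = 2 ^ (2 * q - 2) := by
    rw [← Real.rpow_add (by norm_num : (0:ℝ) < 2)]; ring_nf
  have hJq : (J * p) ^ q = (J ^ (q - 1) * p ^ q) * J := by
    rw [Real.mul_rpow hJ.le hp0.le]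
    have h := Real.rpow_add hJ (q - 1) 1
    rw [show q - 1 + 1 = q by ring, Real.rpow_one] at h
    rw [h]; ring
  have hc2' : 2 ^ (q - 1) * Cc ^ q ≤ c' * (J * (U1 + U2)) := by
    have h5 : 2 ^ (q - 1) * Cc ^ q
        ≤ 2 ^ (q - 1) * ((J * p) ^ q * (2 ^ (q - 1) * (U1 + U2))) :=
      mul_le_mul_of_nonneg_left hCcq (by positivity)
    have h6 : 2 ^ (q - 1) * ((J * p) ^ q * (2 ^ (q - 1) * (U1 + U2)))
        = (2 ^ (2 * q - 2) * J ^ (q - 1) * p ^ q) * (J * (U1 + U2)) := by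
      rw [hJq, ← h2q]; ring
    have h7 : (2 ^ (2 * q - 2) * J ^ (q - 1) * p ^ q) * (J * (U1 + U2))
        ≤ c' * (J * (U1 + U2)) :=
      mul_le_mul_of_nonneg_right hc2 (by positivity)
    linarith
  -- young bounds
  have hy1 : U1 ≤ p * (t * V1) + d1 ^ p := young_aux hconj ht hd1
  have hy2 : U2 ≤ p * (t * V2) + d2 ^ p := young_aux hconj ht hd2
  have hts : t ^ s = t * T1 := by
    have h := Real.rpow_add ht 1 (s - 1)
    rw [show (1:ℝ) + (s - 1) = s by ring, Real.rpow_one] at h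
    rw [h, hT1]
  -- multiplied young bounds
  have hy1' : (c' + 1) * (J * U1) ≤ (c' + 1) * (J * (p * (t * V1) + d1 ^ p)) := by
    apply mul_le_mul_of_nonneg_left _ (by linarith)
    exact mul_le_mul_of_nonneg_left hy1 hJ.le
  have hy2' : (c' + 1) * (J * U2) ≤ (c' + 1) * (J * (p * (t * V2) + d2 ^ p)) := by
    apply mul_le_mul_of_nonneg_left _ (by linarith)
    exact mul_le_mul_of_nonneg_left hy2 hJ.le
  -- assemble
  have hAq : (B + Cc) ^ q ≤ 2 ^ (q - 1) * s ^ q * t ^ ((s - 1) * q) + c' * (J * (U1 + U2)) := by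
    have := mul_le_mul_of_nonneg_left (le_refl (B ^ q + Cc ^ q)) (le_of_lt (by positivity : (0:ℝ) < 2 ^ (q - 1)))
    calc (B + Cc) ^ q ≤ 2 ^ (q - 1) * (B ^ q + Cc ^ q) := h3
      _ = 2 ^ (q - 1) * B ^ q + 2 ^ (q - 1) * Cc ^ q := by ring
      _ ≤ 2 ^ (q - 1) * s ^ q * t ^ ((s - 1) * q) + c' * (J * (U1 + U2)) := by
          rw [hBq]; linarith [hc2']
  rw [hts] at habs ⊢
  have hRHS : (c' + 1) * (t * (B + Cc))
      = (c' + 1) * (s * (t * T1))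
        + ((c' + 1) * (J * (p * (t * V1))) + (c' + 1) * (J * (p * (t * V2)))) := by
    rw [hB, hCc]; ring
  linarith [hAq, habs, hy1', hy2', hRHS]


/-- for `q ∈ (1,2]` with dual exponent `p`, phase `φ(x) = d(x)^s` with
`1 ≤ s < p` and interaction `V(x,y) = (d(x) + d(y))^p` with coupling `J > 0`, setting
`c' = max{2^{q−1}(s−1)^q, 2^{2q−2} J^{q−1} p^q}`, there is `c''' ≥ 0` such that at every
point off the `x₃`-axis (where `d` is differentiable and `|∇d| = 1`):
`|∇_i H^{i,ω}|^q + H^{i,ω} ≤ (c'+1) d(x_i)∇_i d·∇_i H^{i,ω}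
  + (c'+1) J Σ_{j∼i} d^p(ω_j) + c'''`. -/
theorem pointwise_Ubound_example_p_growth
    (q p s Jcoup : ℝ) (hq1 : 1 < q) (hq2 : q ≤ 2) (hpq : 1 / p + 1 / q = 1)
    (hs1 : 1 ≤ s) (hs2 : s < p) (hJ : 0 < Jcoup) :
    ∃ c''' : ℝ, 0 ≤ c''' ∧
      ∀ (i : ℤ) (ω : Conf) (x : Heis),
        (x.1 ≠ 0 ∨ x.2.1 ≠ 0) →
        DifferentiableAt ℝ ccDist x →
        gradNorm ccDist x = 1 →
        gradNorm (hamOne (fun y => ccDist y ^ s)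
              (fun y z => (ccDist y + ccDist z) ^ p) (fun _ _ => Jcoup) i ω) x ^ q +
            hamOne (fun y => ccDist y ^ s)
              (fun y z => (ccDist y + ccDist z) ^ p) (fun _ _ => Jcoup) i ω x ≤
          (max ((2 : ℝ) ^ (q - 1) * (s - 1) ^ q) ((2 : ℝ) ^ (2 * q - 2) * Jcoup ^ (q - 1) * p ^ q) + 1) *
              (ccDist x *
                (X1 ccDist x * X1 (hamOne (fun y => ccDist y ^ s)
                    (fun y z => (ccDist y + ccDist z) ^ p) (fun _ _ => Jcoup) i ω) x +
                  X2 ccDist x * X2 (hamOne (fun y => ccDist y ^ s)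
                    (fun y z => (ccDist y + ccDist z) ^ p) (fun _ _ => Jcoup) i ω) x)) +
            (max ((2 : ℝ) ^ (q - 1) * (s - 1) ^ q) ((2 : ℝ) ^ (2 * q - 2) * Jcoup ^ (q - 1) * p ^ q) + 1) *
              Jcoup * (∑ j ∈ nbr i, ccDist (ω j) ^ p) + c''' := by
  classical
  have hq0 : (0:ℝ) < q := by linarith
  have hq1' : 1/q < 1 := by rw [div_lt_one hq0]; exact hq1
  have hinvq : 0 < 1/q := by positivity
  have hinvp : 0 < 1/p := by linarith
  have hp0 : 0 < p := one_div_pos.mp hinvp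
  have hp1 : 1 < p := by
    have h1 : 1/p < 1 := by linarith
    exact (div_lt_one hp0).mp h1
  have hconj : Real.HolderConjugate p q := Real.holderConjugate_iff.mpr ⟨hp1, by simpa [← one_div] using hpq⟩
  have hqp : q + p = p * q := by
    field_simp [hp0.ne', hq0.ne'] at hpq
    linarith
  set c' := max ((2:ℝ) ^ (q - 1) * (s - 1) ^ q)
      ((2:ℝ) ^ (2 * q - 2) * Jcoup ^ (q - 1) * p ^ q) with hc'def
  have hc'pos : 0 < c' := lt_of_lt_of_le (by positivity) (le_max_right _ _)
  have hdelta : 0 < (c' + 1) * s - 1 := by nlinarith [hc'pos, hs1]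
  have ha : 0 ≤ (s - 1) * q := mul_nonneg (by linarith) hq0.le
  have hab : (s - 1) * q < s := by
    have h1 : s * (q - 1) < p * (q - 1) :=
      mul_lt_mul_of_pos_right hs2 (by linarith)
    have h2 : p * (q - 1) = q := by linarith [hqp]
    nlinarith [h1, h2]
  have hK : 0 ≤ (2:ℝ) ^ (q - 1) * s ^ q :=
    mul_nonneg (Real.rpow_nonneg (by norm_num) _) (Real.rpow_nonneg (by linarith) _)
  obtain ⟨C, hC0, habs⟩ := absorb ha hab hK hdelta
  refine ⟨C, hC0, fun i ω x hx hdiff hgrad => ?_⟩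
  have ht0 : 0 ≤ ccDist x := ccDist_nonneg x
  have ht : 0 < ccDist x := by
    rcases ht0.lt_or_eq with h | h
    · exact h
    · exfalso
      have hmin : IsLocalMin ccDist x :=
        Filter.Eventually.of_forall fun y => by rw [← h]; exact ccDist_nonneg y
      have hf0 := hmin.fderiv_eq_zero
      simp [gradNorm, X1, X2, hf0] at hgrad
  set t := ccDist x with htdef
  set d1 := ccDist (ω (i - 1)) with hd1def
  set d2 := ccDist (ω (i + 1)) with hd2def
  have hd1 : 0 ≤ d1 := ccDist_nonneg _
  have hd2 : 0 ≤ d2 := ccDist_nonneg _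
  have hu1 : 0 < t + d1 := by linarith
  have hu2 : 0 < t + d2 := by linarith
  have hne : (i - 1 : ℤ) ≠ i + 1 := by omega
  have hHeq : hamOne (fun y => ccDist y ^ s)
      (fun y z => (ccDist y + ccDist z) ^ p) (fun _ _ => Jcoup) i ω
      = fun y => ccDist y ^ s + (Jcoup * (ccDist y + d1) ^ p + Jcoup * (ccDist y + d2) ^ p) := by
    funext y
    simp only [hamOne, nbr]
    rw [Finset.sum_pair hne]
  set A := s * t ^ (s - 1)
      + (Jcoup * (p * (t + d1) ^ (p - 1)) + Jcoup * (p * (t + d2) ^ (p - 1))) with hAdef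
  set Dd := fderiv ℝ ccDist x with hDd
  have hD : HasFDerivAt ccDist Dd x := hdiff.hasFDerivAt
  have hF1 : HasFDerivAt (fun y => ccDist y ^ s) ((s * t ^ (s - 1)) • Dd) x :=
    hD.rpow_const (p := s) (Or.inl ht.ne')
  have hF2 : HasFDerivAt (fun y => Jcoup * (ccDist y + d1) ^ p)
      ((Jcoup * (p * (t + d1) ^ (p - 1))) • Dd) x := by
    have h := ((hD.add_const d1).rpow_const (p := p) (Or.inl hu1.ne')).const_mul Jcoup
    simpa [smul_smul] using h
  have hF3 : HasFDerivAt (fun y => Jcoup * (ccDist y + d2) ^ p)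
      ((Jcoup * (p * (t + d2) ^ (p - 1))) • Dd) x := by
    have h := ((hD.add_const d2).rpow_const (p := p) (Or.inl hu2.ne')).const_mul Jcoup
    simpa [smul_smul] using h
  have hF : HasFDerivAt (hamOne (fun y => ccDist y ^ s)
      (fun y z => (ccDist y + ccDist z) ^ p) (fun _ _ => Jcoup) i ω) (A • Dd) x := by
    rw [hHeq, hAdef, add_smul, add_smul]
    exact hF1.add (hF2.add hF3)
  have hX1 : X1 (hamOne (fun y => ccDist y ^ s)
      (fun y z => (ccDist y + ccDist z) ^ p) (fun _ _ => Jcoup) i ω) x = A * X1 ccDist x := by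
    rw [X1, hF.fderiv]
    simp [X1, hDd]
  have hX2 : X2 (hamOne (fun y => ccDist y ^ s)
      (fun y z => (ccDist y + ccDist z) ^ p) (fun _ _ => Jcoup) i ω) x = A * X2 ccDist x := by
    rw [X2, hF.fderiv]
    simp [X2, hDd]
  have hsum1 : X1 ccDist x ^ 2 + X2 ccDist x ^ 2 = 1 := by
    simp only [gradNorm] at hgrad
    exact Real.sqrt_eq_one.mp hgrad
  have hA0 : 0 ≤ A := by
    rw [hAdef]
    have h1 : 0 ≤ s * t ^ (s - 1) := mul_nonneg (by linarith) (Real.rpow_nonneg ht.le _)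
    have h2 : 0 ≤ Jcoup * (p * (t + d1) ^ (p - 1)) :=
      mul_nonneg hJ.le (mul_nonneg hp0.le (Real.rpow_nonneg hu1.le _))
    have h3 : 0 ≤ Jcoup * (p * (t + d2) ^ (p - 1)) :=
      mul_nonneg hJ.le (mul_nonneg hp0.le (Real.rpow_nonneg hu2.le _))
    linarith
  have hgH : gradNorm (hamOne (fun y => ccDist y ^ s)
      (fun y z => (ccDist y + ccDist z) ^ p) (fun _ _ => Jcoup) i ω) x = A := by
    simp only [gradNorm]
    rw [hX1, hX2,
      show (A * X1 ccDist x) ^ 2 + (A * X2 ccDist x) ^ 2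
        = A ^ 2 * (X1 ccDist x ^ 2 + X2 ccDist x ^ 2) by ring,
      hsum1, mul_one, Real.sqrt_sq hA0]
  have hHx : hamOne (fun y => ccDist y ^ s)
      (fun y z => (ccDist y + ccDist z) ^ p) (fun _ _ => Jcoup) i ω x
      = t ^ s + (Jcoup * (t + d1) ^ p + Jcoup * (t + d2) ^ p) := by
    have h := congrFun hHeq x
    simpa using h
  have hsumw : ∑ j ∈ nbr i, ccDist (ω j) ^ p = d1 ^ p + d2 ^ p := by
    simp only [nbr]
    rw [Finset.sum_pair hne]
  rw [hgH, hHx, hX1, hX2, hsumw]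
  have hdot : X1 ccDist x * (A * X1 ccDist x) + X2 ccDist x * (A * X2 ccDist x) = A := by
    linear_combination A * hsum1
  rw [hdot, hAdef]
  exact scalar_key hq1 hp1 hqp hconj hs1 hJ ht hd1 hd2 hc'pos.le (le_max_right _ _) (habs t ht)


end PaperLSI
end
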